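/- arXiv:2509.18417 — 4 statements merged into one kernel-verified Lean document; each statement's English description precedes it below -/
import Mathlib

section
/- For any finite simple connected graph G and any real number α, the spectral radius λ(G) of the adjacency matrix satisfies λ(G) ≥ 2·R_α(G) / Σ_{v∈V} d_v^{2α}, where R_α(G) = Σ_{uv∈E} (d_u·d_v)^α is the general Randić index. -/
open Finset

variable {V : Type*}

/-- The product of endpoint degrees, raised to power `α`, as a function on `Sym2 V`. -/
noncomputable def degProd [Fintype V] (G : SimpleGraph V) [DecidableRel G.Adj] (α : ℝ) :
    Sym2 V → ℝ :=
  Sym2.lift ⟨fun u v => ((G.degree u : ℝ) * (G.degree v : ℝ)) ^ α,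
    fun u v => by simp [mul_comm]⟩

/-- The general Randić index `R_α(G) = ∑_{uv ∈ E} (d_u d_v)^α`. -/
noncomputable def randic [Fintype V] [DecidableEq V] (G : SimpleGraph V) [DecidableRel G.Adj]
    (α : ℝ) : ℝ :=
  ∑ e ∈ G.edgeFinset, degProd G α e

/-- `lam` is the largest (real) eigenvalue of the symmetric matrix `A`,
i.e. the spectral radius for an adjacency matrix. -/
def IsMaxEigenvalue [Fintype V] (A : Matrix V V ℝ) (lam : ℝ) : Prop :=
  (∃ x : V → ℝ, x ≠ 0 ∧ A.mulVec x = lam • x) ∧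
  ∀ (μ : ℝ) (x : V → ℝ), x ≠ 0 → A.mulVec x = μ • x → μ ≤ lam

/-! The Rayleigh quotient of the vector `x v = d_v ^ α` is at most `λ`, since `λ • 1 - A` is
positive semidefinite. Its numerator `xᵀ A x` sums `x u * x v` over the darts of `G`, each edge
counted twice, so it equals `2 R_α(G)`; its denominator is `∑ d_v ^ (2α)`. When the denominator
vanishes the bound reads `0 ≤ λ`, which holds because `λ` dominates the zero diagonal of `A`. -/

open Matrix

namespace IsMaxEigenvalue

variable {n : Type*} [Fintype n] [DecidableEq n] {A : Matrix n n ℝ} {lam : ℝ}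

theorem posSemidef_smul_one_sub (hA : A.IsHermitian) (h : IsMaxEigenvalue A lam) :
    (lam • 1 - A).PosSemidef := by
  have hB : (lam • 1 - A).IsHermitian := (isHermitian_one.smul (IsSelfAdjoint.all lam)).sub hA
  rw [hB.posSemidef_iff_eigenvalues_nonneg]
  intro i
  set v : n → ℝ := ⇑(hB.eigenvectorBasis i)
  have hv : v ≠ 0 := fun h0 =>
    hB.eigenvectorBasis.orthonormal.ne_zero i (by ext j; simpa using congrFun h0 j)
  have hAv : A *ᵥ v = (lam - hB.eigenvalues i) • v := by
    have hBv := hB.mulVec_eigenvectorBasis i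
    rw [sub_mulVec, smul_mulVec, one_mulVec] at hBv
    rw [sub_smul, ← hBv, sub_sub_cancel]
  simpa using h.2 _ v hv hAv

theorem dotProduct_mulVec_le (hA : A.IsHermitian) (h : IsMaxEigenvalue A lam) (x : n → ℝ) :
    x ⬝ᵥ A *ᵥ x ≤ lam * (x ⬝ᵥ x) := by
  have := (h.posSemidef_smul_one_sub hA).dotProduct_mulVec_nonneg x
  rw [star_trivial, sub_mulVec, smul_mulVec, one_mulVec, dotProduct_sub, dotProduct_smul,
    smul_eq_mul] at this
  linarith

theorem diag_le (hA : A.IsHermitian) (h : IsMaxEigenvalue A lam) (i : n) : A i i ≤ lam := by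
  simpa using h.dotProduct_mulVec_le hA (Pi.single i 1)

end IsMaxEigenvalue

namespace SimpleGraph

variable [Fintype V] (G : SimpleGraph V) [DecidableRel G.Adj]

theorem sum_darts_eq_two_nsmul_sum_edgeFinset [DecidableEq V] {M : Type*} [AddCommMonoid M]
    (f : Sym2 V → M) : ∑ d : G.Dart, f d.edge = 2 • ∑ e ∈ G.edgeFinset, f e := by
  rw [← sum_fiberwise_of_maps_to (t := G.edgeFinset) fun d _ => mem_edgeFinset.mpr d.edge_mem,
    smul_sum]
  refine sum_congr rfl fun e he => ?_
  rw [sum_congr rfl fun d hd => congrArg f (mem_filter.mp hd).2, sum_const,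
    G.dart_edge_fiber_card e (mem_edgeFinset.mp he)]

theorem dotProduct_adjMatrix_mulVec_eq_sum_darts {α : Type*} [NonAssocSemiring α] (x y : V → α) :
    x ⬝ᵥ G.adjMatrix α *ᵥ y = ∑ d : G.Dart, x d.fst * y d.snd := by
  rw [dotProduct_mulVec_adjMatrix, ← sum_product', ← sum_filter]
  exact sum_bij' (fun p hp => ⟨p, (mem_filter.mp hp).2⟩) (fun d _ => d.toProd)
    (by simp) (by simp) (by simp) (by simp) (by simp)

theorem two_mul_randic_eq_dotProduct [DecidableEq V] (α : ℝ) :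
    2 * randic G α =
      (fun v => (G.degree v : ℝ) ^ α) ⬝ᵥ G.adjMatrix ℝ *ᵥ fun v => (G.degree v : ℝ) ^ α := by
  rw [randic, two_mul, ← two_nsmul, ← sum_darts_eq_two_nsmul_sum_edgeFinset,
    dotProduct_adjMatrix_mulVec_eq_sum_darts]
  exact sum_congr rfl fun d _ => Real.mul_rpow (Nat.cast_nonneg _) (Nat.cast_nonneg _)

end SimpleGraph

theorem spectral_radius_ge_randic_bound_general
    [Fintype V] [DecidableEq V] [Nonempty V] (G : SimpleGraph V) [DecidableRel G.Adj]
    (α lam : ℝ)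
    (hlam : IsMaxEigenvalue (G.adjMatrix ℝ) lam) :
    lam ≥ 2 * randic G α / ∑ v : V, (G.degree v : ℝ) ^ (2 * α) := by
  have hA := G.isHermitian_adjMatrix ℝ
  set x : V → ℝ := fun v => (G.degree v : ℝ) ^ α
  have hxx : x ⬝ᵥ x = ∑ v : V, (G.degree v : ℝ) ^ (2 * α) := sum_congr rfl fun v _ => by
    rw [← sq, ← Real.rpow_natCast, ← Real.rpow_mul (Nat.cast_nonneg _), mul_comm, Nat.cast_ofNat]
  rw [G.two_mul_randic_eq_dotProduct, ← hxx, ge_iff_le]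
  rcases (star_trivial x ▸ dotProduct_star_self_nonneg x).eq_or_lt with hx0 | hxpos
  · simpa [← hx0] using hlam.diag_le hA (Classical.arbitrary V)
  · rw [div_le_iff₀ hxpos]
    exact hlam.dotProduct_mulVec_le hA x

theorem spectral_radius_ge_randic_bound
    [Fintype V] [DecidableEq V] [Nonempty V] (G : SimpleGraph V) [DecidableRel G.Adj]
    (hconn : G.Connected) (α lam : ℝ)
    (hlam : IsMaxEigenvalue (G.adjMatrix ℝ) lam) :
    lam ≥ 2 * randic G α / ∑ v : V, (G.degree v : ℝ) ^ (2 * α) :=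
  spectral_radius_ge_randic_bound_general G α lam hlam
end

section
/- The spectral radius of any finite simple connected graph satisfies λ(G) ≥ (1/|E|) Σ_{uv∈E} √(d_u d_v), i.e., λ(G) is at least the average over edges of the geometric mean of the endpoint degrees. -/
open Finset

variable {V : Type*}

/-- The geometric mean of the endpoint degrees, as a function on `Sym2 V`. -/
noncomputable def degGeomMean [Fintype V] (G : SimpleGraph V) [DecidableRel G.Adj] :
    Sym2 V → ℝ :=
  Sym2.lift ⟨fun u v => Real.sqrt ((G.degree u : ℝ) * (G.degree v : ℝ)),
    fun u v => by simp [mul_comm]⟩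

/-! The largest eigenvalue of a symmetric matrix bounds its Rayleigh quotient from above. For the
test vector `x v = √(d v)` one has `x ⬝ᵥ A x = 2 ∑_{uv ∈ E} √(d u d v)` and `x ⬝ᵥ x = ∑ d v = 2|E|`. -/

namespace Matrix

variable {n : Type*} [Fintype n] {A : Matrix n n ℝ} {lam : ℝ}

lemma IsHermitian.eigenvalues_le_of_isMaxEigenvalue [DecidableEq n] (hA : A.IsHermitian)
    (hlam : IsMaxEigenvalue A lam) (j : n) : hA.eigenvalues j ≤ lam :=
  hlam.2 _ _ (fun h => hA.eigenvectorBasis.orthonormal.ne_zero j (by ext i; exact congrFun h i))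
    (hA.mulVec_eigenvectorBasis j)

lemma IsHermitian.posSemidef_algebraMap_sub_of_isMaxEigenvalue [DecidableEq n] (hA : A.IsHermitian)
    (hlam : IsMaxEigenvalue A lam) : (algebraMap ℝ (Matrix n n ℝ) lam - A).PosSemidef := by
  rw [posSemidef_iff_isHermitian_and_spectrum_nonneg]
  refine ⟨(IsSelfAdjoint.algebraMap _ (.all lam)).sub hA, ?_⟩
  rw [← spectrum.singleton_sub_eq, hA.spectrum_real_eq_range_eigenvalues]
  rintro _ ⟨_, rfl, _, ⟨j, rfl⟩, rfl⟩
  exact sub_nonneg.2 (hA.eigenvalues_le_of_isMaxEigenvalue hlam j)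

lemma IsHermitian.dotProduct_mulVec_le_of_isMaxEigenvalue (hA : A.IsHermitian)
    (hlam : IsMaxEigenvalue A lam) (x : n → ℝ) : x ⬝ᵥ (A *ᵥ x) ≤ lam * (x ⬝ᵥ x) := by
  classical
  have := (hA.posSemidef_algebraMap_sub_of_isMaxEigenvalue hlam).dotProduct_mulVec_nonneg x
  rw [star_trivial, sub_mulVec, Algebra.algebraMap_eq_smul_one, smul_mulVec, one_mulVec,
    dotProduct_sub, dotProduct_smul, smul_eq_mul] at this
  linarith

end Matrix

namespace SimpleGraph

variable [Fintype V] (G : SimpleGraph V) [DecidableRel G.Adj] {M : Type*} [AddCommMonoid M]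

lemma sum_darts_edge (f : Sym2 V → M) :
    ∑ d : G.Dart, f d.edge = 2 • ∑ e ∈ G.edgeFinset, f e := by
  classical
  rw [← sum_fiberwise_of_maps_to (g := Dart.edge) (t := G.edgeFinset) (fun d _ => by simp),
    smul_sum]
  refine sum_congr rfl fun e he => ?_
  rw [sum_congr rfl fun d hd => by rw [(mem_filter.1 hd).2], sum_const,
    dart_edge_fiber_card G e (mem_edgeFinset.1 he)]

lemma sum_sum_ite_adj (g : V → V → M) :
    ∑ i, ∑ j, (if G.Adj i j then g i j else 0) = ∑ d : G.Dart, g d.fst d.snd := by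
  rw [← sum_product', ← sum_filter]
  exact sum_bij' (fun p hp => ⟨p, (mem_filter.1 hp).2⟩) (fun d _ => d.toProd)
    (by simp) (by simp) (by simp) (by simp) (by simp)

open Matrix in
lemma dotProduct_mulVec_adjMatrix_sqrt_degree :
    (fun v => √(G.degree v : ℝ)) ⬝ᵥ (G.adjMatrix ℝ *ᵥ fun v => √(G.degree v : ℝ)) =
      2 * ∑ e ∈ G.edgeFinset, degGeomMean G e := by
  have hdart (d : G.Dart) :
      √(G.degree d.fst : ℝ) * √(G.degree d.snd : ℝ) = degGeomMean G d.edge := by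
    simp [degGeomMean, Dart.edge, Real.sqrt_mul]
  rw [dotProduct_mulVec_adjMatrix, sum_sum_ite_adj, sum_congr rfl fun d _ => hdart d,
    sum_darts_edge, nsmul_eq_mul, Nat.cast_ofNat]

lemma dotProduct_sqrt_degree_self :
    (fun v => √(G.degree v : ℝ)) ⬝ᵥ (fun v => √(G.degree v : ℝ)) = 2 * #G.edgeFinset := by
  simp only [dotProduct, Real.mul_self_sqrt (Nat.cast_nonneg _)]
  exact_mod_cast G.sum_degrees_eq_twice_card_edges

end SimpleGraph

theorem spectral_radius_ge_avg_geom_mean_degree_general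
    [Fintype V] (G : SimpleGraph V) [DecidableRel G.Adj]
    (hE : G.edgeFinset.Nonempty)
    (lam : ℝ) (hlam : IsMaxEigenvalue (G.adjMatrix ℝ) lam) :
    lam ≥ (1 / (G.edgeFinset.card : ℝ)) * ∑ e ∈ G.edgeFinset, degGeomMean G e := by
  have hrayleigh := (G.isHermitian_adjMatrix ℝ).dotProduct_mulVec_le_of_isMaxEigenvalue hlam
    fun v => √(G.degree v : ℝ)
  rw [G.dotProduct_mulVec_adjMatrix_sqrt_degree, G.dotProduct_sqrt_degree_self] at hrayleigh
  have hcard : (0 : ℝ) < #G.edgeFinset := by exact_mod_cast hE.card_pos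
  rw [ge_iff_le, one_div, inv_mul_le_iff₀ hcard]
  linarith

theorem spectral_radius_ge_avg_geom_mean_degree
    [Fintype V] [DecidableEq V] [Nonempty V] (G : SimpleGraph V) [DecidableRel G.Adj]
    (hconn : G.Connected) (hE : G.edgeFinset.Nonempty)
    (lam : ℝ) (hlam : IsMaxEigenvalue (G.adjMatrix ℝ) lam) :
    lam ≥ (1 / (G.edgeFinset.card : ℝ)) * ∑ e ∈ G.edgeFinset, degGeomMean G e :=
  spectral_radius_ge_avg_geom_mean_degree_general G hE lam hlam
end

section
/- For any finite simple connected graph G and any real α, the normalized Randić function R̄_α := (Σ_{uv∈E} (d_u d_v)^α) / (Σ_{v∈V} d_v^{2α}) satisfies R̄_α ≤ λ(G)/2. -/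
open Finset

variable {V : Type*}

/-!
The degree vector `x v = d_v ^ α` satisfies `xᵀ A x = 2 R_α` and `xᵀ x = ∑ d_v ^ (2α)`, so the
claim is the Rayleigh bound `xᵀ A x ≤ λ xᵀ x` for a symmetric matrix: `λ • 1 - A` is positive
semidefinite, because its eigenvectors are eigenvectors of `A`. Testing the same bound on a
standard basis vector gives `0 ≤ λ` (the diagonal of `A` vanishes), which covers the case of a
vanishing denominator.
-/

namespace Matrix

variable {n : Type*} [Fintype n] [DecidableEq n] {A : Matrix n n ℝ} {c : ℝ}

theorem IsHermitian.posSemidef_smul_one_sub (hA : A.IsHermitian)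
    (h : ∀ (μ : ℝ) (x : n → ℝ), x ≠ 0 → A *ᵥ x = μ • x → μ ≤ c) :
    (c • (1 : Matrix n n ℝ) - A).PosSemidef := by
  have hM : (c • (1 : Matrix n n ℝ) - A).IsHermitian := (isHermitian_one.smul (.all c)).sub hA
  refine hM.posSemidef_iff_eigenvalues_nonneg.2 fun i => ?_
  rw [Pi.zero_apply]
  set v := ⇑(hM.eigenvectorBasis i)
  have hv : v ≠ 0 := fun h0 =>
    hM.eigenvectorBasis.orthonormal.ne_zero i (by ext j; exact congrFun h0 j)
  have hAv : A *ᵥ v = (c - hM.eigenvalues i) • v := by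
    have hMv := hM.mulVec_eigenvectorBasis i
    rw [sub_mulVec, smul_mulVec, one_mulVec] at hMv
    rw [sub_smul, ← hMv, sub_sub_cancel]
  linarith [h _ v hv hAv]

theorem IsHermitian.dotProduct_mulVec_le (hA : A.IsHermitian)
    (h : ∀ (μ : ℝ) (x : n → ℝ), x ≠ 0 → A *ᵥ x = μ • x → μ ≤ c) (x : n → ℝ) :
    x ⬝ᵥ A *ᵥ x ≤ c * (x ⬝ᵥ x) := by
  have hx := (hA.posSemidef_smul_one_sub h).dotProduct_mulVec_nonneg x
  rw [star_trivial, sub_mulVec, smul_mulVec, one_mulVec, dotProduct_sub, dotProduct_smul,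
    smul_eq_mul] at hx
  linarith

theorem IsHermitian.diag_le (hA : A.IsHermitian)
    (h : ∀ (μ : ℝ) (x : n → ℝ), x ≠ 0 → A *ᵥ x = μ • x → μ ≤ c) (i : n) : A i i ≤ c := by
  simpa using hA.dotProduct_mulVec_le h (Pi.single i 1)

end Matrix

namespace SimpleGraph

open Matrix

variable [Fintype V] (G : SimpleGraph V) [DecidableRel G.Adj] {M : Type*} [AddCommMonoid M]

theorem sum_dart_edge [DecidableEq V] (f : Sym2 V → M) :
    ∑ d : G.Dart, f d.edge = 2 • ∑ e ∈ G.edgeFinset, f e := by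
  rw [← sum_fiberwise_of_maps_to (g := Dart.edge) (t := G.edgeFinset)
    (fun d _ => mem_edgeFinset.2 d.edge_mem), smul_sum]
  refine sum_congr rfl fun e he => ?_
  rw [sum_congr rfl fun d hd => by rw [(mem_filter.1 hd).2], sum_const,
    dart_edge_fiber_card G e (mem_edgeFinset.1 he)]

theorem sum_sum_ite_adj_s7 (f : Sym2 V → M) :
    ∑ u, ∑ v, (if G.Adj u v then f s(u, v) else 0) = ∑ d : G.Dart, f d.edge := by
  rw [← Fintype.sum_prod_type', ← sum_filter]
  refine sum_bij' (fun p hp => ⟨p, (mem_filter.1 hp).2⟩) (fun d _ => d.toProd) ?_ ?_ ?_ ?_ ?_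
    <;> simp

theorem dotProduct_mulVec_adjMatrix_rpow_degree [DecidableEq V] (α : ℝ) :
    (fun v => (G.degree v : ℝ) ^ α) ⬝ᵥ G.adjMatrix ℝ *ᵥ (fun v => (G.degree v : ℝ) ^ α)
      = 2 * randic G α := by
  rw [dotProduct_mulVec_adjMatrix, randic, two_mul, ← two_nsmul, ← sum_dart_edge,
    ← sum_sum_ite_adj_s7]
  simp [degProd, Real.mul_rpow]

theorem dotProduct_self_rpow_degree (α : ℝ) :
    (fun v => (G.degree v : ℝ) ^ α) ⬝ᵥ (fun v => (G.degree v : ℝ) ^ α)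
      = ∑ v, (G.degree v : ℝ) ^ (2 * α) := by
  refine sum_congr rfl fun v _ => ?_
  rw [mul_comm 2 α, Real.rpow_mul (Nat.cast_nonneg _), Real.rpow_two, sq]

end SimpleGraph

theorem normalized_randic_le_half_spectral_radius_general
    [Fintype V] [DecidableEq V] [Nonempty V] (G : SimpleGraph V) [DecidableRel G.Adj]
    (α lam : ℝ) (hlam : IsMaxEigenvalue (G.adjMatrix ℝ) lam) :
    randic G α / (∑ v : V, (G.degree v : ℝ) ^ (2 * α)) ≤ lam / 2 := by
  obtain ⟨-, hle⟩ := hlam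
  have hA : (G.adjMatrix ℝ).IsHermitian := Matrix.isHermitian_iff_isSymm.2 G.isSymm_adjMatrix
  have hquad := hA.dotProduct_mulVec_le hle fun v => (G.degree v : ℝ) ^ α
  rw [G.dotProduct_mulVec_adjMatrix_rpow_degree, G.dotProduct_self_rpow_degree] at hquad
  have hlam_nonneg : 0 ≤ lam := by simpa using hA.diag_le hle (Classical.arbitrary V)
  exact div_le_of_le_mul₀ (sum_nonneg fun v _ => by positivity) (by positivity) (by linarith)

theorem normalized_randic_le_half_spectral_radius
    [Fintype V] [DecidableEq V] [Nonempty V] (G : SimpleGraph V) [DecidableRel G.Adj]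
    (hconn : G.Connected) (hdeg : ∀ v : V, 1 ≤ G.degree v)
    (α lam : ℝ) (hlam : IsMaxEigenvalue (G.adjMatrix ℝ) lam) :
    randic G α / (∑ v : V, (G.degree v : ℝ) ^ (2 * α)) ≤ lam / 2 :=
  normalized_randic_le_half_spectral_radius_general G α lam hlam
end

section
/- Define, for a finite simple connected graph G with all degrees positive, the probability measures p_E^α(uv) = (d_u d_v)^α / Σ_{uv∈E}(d_u d_v)^α on edges and p_V^α(v) = d_v^{2α} / Σ_{v∈V} d_v^{2α} on vertices, with Shannon entropies H_E^α and H_V^α respectively, and the normalized Randić function R̄_α = (Σ_{uv∈E}(d_u d_v)^α)/(Σ_{v∈V} d_v^{2α}). Then for all α ≠ 0, the derivative identity (d/dα) log R̄_α = (1/α)·(log R̄_α + H_V^α − H_E^α) holds. -/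
open Finset

variable {V : Type*}

/-- The vertex normalization `∑_{v ∈ V} d_v^{2α}`. -/
noncomputable def vertexSum [Fintype V] (G : SimpleGraph V) [DecidableRel G.Adj] (α : ℝ) : ℝ :=
  ∑ v : V, (G.degree v : ℝ) ^ (2 * α)

/-- The normalized Randić function `R̄_α = (∑_{uv∈E} (d_u d_v)^α) / (∑_{v∈V} d_v^{2α})`. -/
noncomputable def normRandic [Fintype V] [DecidableEq V] (G : SimpleGraph V)
    [DecidableRel G.Adj] (α : ℝ) : ℝ :=
  randic G α / vertexSum G α

/-- Shannon entropy `H_E^α` of the edge distribution `p_E^α(uv) = (d_u d_v)^α / R_α`. -/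
noncomputable def edgeEntropy [Fintype V] [DecidableEq V] (G : SimpleGraph V)
    [DecidableRel G.Adj] (α : ℝ) : ℝ :=
  -∑ e ∈ G.edgeFinset,
      (degProd G α e / randic G α) * Real.log (degProd G α e / randic G α)

/-- Shannon entropy `H_V^α` of the vertex distribution `p_V^α(v) = d_v^{2α} / ∑_w d_w^{2α}`. -/
noncomputable def vertexEntropy [Fintype V] (G : SimpleGraph V)
    [DecidableRel G.Adj] (α : ℝ) : ℝ :=
  -∑ v : V,
      ((G.degree v : ℝ) ^ (2 * α) / vertexSum G α) *
        Real.log ((G.degree v : ℝ) ^ (2 * α) / vertexSum G α)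

/-!
Writing `Z(a) = ∑ᵢ wᵢ ^ a` for positive weights `wᵢ`, the distribution `pᵢ = wᵢ ^ a / Z(a)` has
`log pᵢ = a log wᵢ - log Z(a)`, so its entropy is `H(a) = log Z(a) - a ∑ᵢ pᵢ log wᵢ`, while
`(log Z)'(a) = ∑ᵢ pᵢ log wᵢ`. Hence `a (log Z)'(a) = log Z(a) - H(a)`. Both the Randić index and
the vertex normalization are such sums (with weights `d_u d_v` and `d_v ^ 2`), and `log R̄_α` is
their difference of logarithms.
-/

open Real

section LogSumRpow

variable {ι : Type*} {s : Finset ι} {w : ι → ℝ}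

lemma sum_rpow_pos (hs : s.Nonempty) (hw : ∀ i ∈ s, 0 < w i) (α : ℝ) :
    0 < ∑ i ∈ s, w i ^ α :=
  sum_pos (fun i hi => rpow_pos_of_pos (hw i hi) α) hs

lemma hasDerivAt_log_sum_rpow (hs : s.Nonempty) (hw : ∀ i ∈ s, 0 < w i) (α : ℝ) :
    HasDerivAt (fun a => log (∑ i ∈ s, w i ^ a))
      ((∑ i ∈ s, w i ^ α * log (w i)) / ∑ i ∈ s, w i ^ α) α := by
  have hsum : HasDerivAt (fun a => ∑ i ∈ s, w i ^ a) (∑ i ∈ s, w i ^ α * log (w i)) α :=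
    HasDerivAt.fun_sum fun i hi => (hasStrictDerivAt_const_rpow (hw i hi) α).hasDerivAt
  exact hsum.log (sum_rpow_pos hs hw α).ne'

lemma entropy_of_rpow_weights (hs : s.Nonempty) (hw : ∀ i ∈ s, 0 < w i) (α : ℝ) :
    -∑ i ∈ s, (w i ^ α / ∑ j ∈ s, w j ^ α) * log (w i ^ α / ∑ j ∈ s, w j ^ α) =
      log (∑ i ∈ s, w i ^ α) -
        α * ((∑ i ∈ s, w i ^ α * log (w i)) / ∑ i ∈ s, w i ^ α) := by
  set Z := ∑ j ∈ s, w j ^ α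
  have hZ : 0 < Z := sum_rpow_pos hs hw α
  have hterm : ∀ i ∈ s, (w i ^ α / Z) * log (w i ^ α / Z) =
      (α * (w i ^ α * log (w i)) - w i ^ α * log Z) / Z := by
    intro i hi
    rw [log_div (rpow_pos_of_pos (hw i hi) α).ne' hZ.ne', log_rpow (hw i hi)]
    ring
  rw [sum_congr rfl hterm, ← sum_div, sum_sub_distrib, ← mul_sum, ← sum_mul,
    sub_div, mul_div_cancel_left₀ _ hZ.ne', mul_div_assoc]
  ring

theorem hasDerivAt_log_sum_rpow_eq_entropy (hs : s.Nonempty) (hw : ∀ i ∈ s, 0 < w i)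
    {α : ℝ} (hα : α ≠ 0) :
    HasDerivAt (fun a => log (∑ i ∈ s, w i ^ a))
      ((1 / α) * (log (∑ i ∈ s, w i ^ α) +
        ∑ i ∈ s, (w i ^ α / ∑ j ∈ s, w j ^ α) * log (w i ^ α / ∑ j ∈ s, w j ^ α))) α := by
  convert hasDerivAt_log_sum_rpow hs hw α using 1
  rw [← sub_neg_eq_add, entropy_of_rpow_weights hs hw α]
  field_simp
  ring

end LogSumRpow

noncomputable def degMul [Fintype V] (G : SimpleGraph V) [DecidableRel G.Adj] : Sym2 V → ℝ :=
  Sym2.lift ⟨fun u v => (G.degree u : ℝ) * (G.degree v : ℝ), fun u v => by simp [mul_comm]⟩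

section Degrees

variable [Fintype V] (G : SimpleGraph V) [DecidableRel G.Adj]

lemma degProd_eq_degMul_rpow (a : ℝ) (e : Sym2 V) : degProd G a e = degMul G e ^ a := by
  induction e using Sym2.ind with
  | _ u v => rfl

lemma degMul_pos (hdeg : ∀ v : V, 1 ≤ G.degree v) (e : Sym2 V) : 0 < degMul G e := by
  induction e using Sym2.ind with
  | _ u v => exact mul_pos (by exact_mod_cast hdeg u) (by exact_mod_cast hdeg v)

lemma randic_eq_sum_rpow [DecidableEq V] (a : ℝ) :
    randic G a = ∑ e ∈ G.edgeFinset, degMul G e ^ a := by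
  simp only [randic, degProd_eq_degMul_rpow]

lemma edgeEntropy_eq [DecidableEq V] (a : ℝ) :
    edgeEntropy G a = -∑ e ∈ G.edgeFinset,
      (degMul G e ^ a / ∑ f ∈ G.edgeFinset, degMul G f ^ a) *
        log (degMul G e ^ a / ∑ f ∈ G.edgeFinset, degMul G f ^ a) := by
  simp only [edgeEntropy, randic_eq_sum_rpow, degProd_eq_degMul_rpow]

lemma degree_rpow_two_mul (v : V) (a : ℝ) :
    (G.degree v : ℝ) ^ (2 * a) = ((G.degree v : ℝ) ^ 2) ^ a := by
  rw [← rpow_natCast_mul (Nat.cast_nonneg _), Nat.cast_ofNat]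

lemma vertexSum_eq_sum_rpow (a : ℝ) :
    vertexSum G a = ∑ v : V, ((G.degree v : ℝ) ^ 2) ^ a := by
  simp only [vertexSum, degree_rpow_two_mul]

lemma vertexEntropy_eq (a : ℝ) :
    vertexEntropy G a = -∑ v : V,
      (((G.degree v : ℝ) ^ 2) ^ a / ∑ w : V, ((G.degree w : ℝ) ^ 2) ^ a) *
        log (((G.degree v : ℝ) ^ 2) ^ a / ∑ w : V, ((G.degree w : ℝ) ^ 2) ^ a) := by
  simp only [vertexEntropy, vertexSum_eq_sum_rpow, degree_rpow_two_mul]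

end Degrees

theorem deriv_log_normalized_randic_general
    [Fintype V] [DecidableEq V] [Nonempty V] (G : SimpleGraph V) [DecidableRel G.Adj]
    (hE : G.edgeFinset.Nonempty) (hdeg : ∀ v : V, 1 ≤ G.degree v)
    (α : ℝ) (hα : α ≠ 0) :
    HasDerivAt (fun a : ℝ => Real.log (normRandic G a))
      ((1 / α) * (Real.log (normRandic G α) + vertexEntropy G α - edgeEntropy G α)) α := by
  have hwE : ∀ e ∈ G.edgeFinset, 0 < degMul G e := fun e _ => degMul_pos G hdeg e
  have hwV : ∀ v ∈ (univ : Finset V), 0 < (G.degree v : ℝ) ^ 2 :=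
    fun v _ => pow_pos (Nat.cast_pos.mpr (hdeg v)) 2
  have hlog : ∀ a, log (normRandic G a) = log (randic G a) - log (vertexSum G a) := fun a => by
    rw [normRandic, randic_eq_sum_rpow, vertexSum_eq_sum_rpow,
      log_div (sum_rpow_pos hE hwE a).ne' (sum_rpow_pos univ_nonempty hwV a).ne']
  simp only [hlog, randic_eq_sum_rpow, vertexSum_eq_sum_rpow, vertexEntropy_eq, edgeEntropy_eq]
  exact ((hasDerivAt_log_sum_rpow_eq_entropy hE hwE hα).fun_sub
    (hasDerivAt_log_sum_rpow_eq_entropy univ_nonempty hwV hα)).congr_deriv (by ring)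

theorem deriv_log_normalized_randic
    [Fintype V] [DecidableEq V] [Nonempty V] (G : SimpleGraph V) [DecidableRel G.Adj]
    (hconn : G.Connected) (hE : G.edgeFinset.Nonempty) (hdeg : ∀ v : V, 1 ≤ G.degree v)
    (α : ℝ) (hα : α ≠ 0) :
    HasDerivAt (fun a : ℝ => Real.log (normRandic G a))
      ((1 / α) * (Real.log (normRandic G α) + vertexEntropy G α - edgeEntropy G α)) α :=
  deriv_log_normalized_randic_general G hE hdeg α hα
end
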